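/- Let U ⊆ ℝ^q be open, Γ a continuous field of connection coefficients on U, ψ : U → (Fin q → ℝ) a continuous covector field, σ : U → (Fin q → Fin q → ℝ) a continuous symmetric bilinear field (σ_{αβ} = σ_{βα}), and φ : U → (Fin q → ℝ) a continuous vector field. Define the na₍₃₎-type deformed connection Γ̄^τ_{αβ} = Γ^τ_{αβ} + ψ_α δ^τ_β + ψ_β δ^τ_α + σ_{αβ} φ^τ. If u : (η₁,η₂) → U is an autoparallel of Γ with factor ρ, then for every η the Γ̄-acceleration a^τ(η) := u''^τ(η) + Σ_{α,β} Γ̄^τ_{αβ}(u(η)) u'^α(η) u'^β(η) satisfies a = (ρ + 2 Σ_τ ψ_τ(u) u'^τ) • u' + (Σ_{α,β} σ_{αβ}(u) u'^α u'^β) • φ(u); in particular a(η) lies in the linear span of u'(η) and φ(u(η)). (Hence na₍₃₎-type deformations carry every a-parallel into a nearly autoparallel curve.) -/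

import Mathlib

/-- Kronecker delta on `Fin q`. -/
def kron {q : ℕ} (μ α : Fin q) : ℝ := if μ = α then 1 else 0

/-!
The point is pointwise tensor algebra: contracting the deformation
`ψ_α δ^τ_β + ψ_β δ^τ_α + σ_{αβ} φ^τ` twice with `u'` gives
`2 (ψ_γ u'^γ) u'^τ + (σ_{αβ} u'^α u'^β) φ^τ`, so adding it to the `Γ`-acceleration `ρ u'`
only adds a multiple of `u'` and a multiple of `φ`.
-/

open Finset

section Contraction

variable {q : ℕ}

lemma sum_kron_mul (τ : Fin q) (f : Fin q → ℝ) : ∑ β, kron τ β * f β = f τ := by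
  simp [kron]

lemma sum_sum_mul_kron_left (τ : Fin q) (ψ v : Fin q → ℝ) :
    ∑ α, ∑ β, ψ α * kron τ β * v α * v β = (∑ γ, ψ γ * v γ) * v τ := by
  rw [sum_mul]
  refine sum_congr rfl fun α _ => ?_
  rw [← sum_kron_mul τ (fun β => ψ α * v α * v β)]
  exact sum_congr rfl fun β _ => by ring

lemma sum_sum_mul_kron_right (τ : Fin q) (ψ v : Fin q → ℝ) :
    ∑ α, ∑ β, ψ β * kron τ α * v α * v β = (∑ γ, ψ γ * v γ) * v τ := by
  rw [sum_comm, ← sum_sum_mul_kron_left]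
  exact sum_congr rfl fun _ _ => sum_congr rfl fun _ _ => by ring

lemma sum_sum_deformed_mul (Γ : Fin q → Fin q → Fin q → ℝ) (ψ : Fin q → ℝ)
    (σ : Fin q → Fin q → ℝ) (φ v : Fin q → ℝ) (τ : Fin q) :
    ∑ α, ∑ β, (Γ τ α β + ψ α * kron τ β + ψ β * kron τ α + σ α β * φ τ) * v α * v β =
      ∑ α, ∑ β, Γ τ α β * v α * v β + (2 * ∑ γ, ψ γ * v γ) * v τ +
        (∑ α, ∑ β, σ α β * v α * v β) * φ τ := by
  have hσ : ∑ α, ∑ β, σ α β * φ τ * v α * v β = (∑ α, ∑ β, σ α β * v α * v β) * φ τ := by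
    simp only [sum_mul]
    exact sum_congr rfl fun _ _ => sum_congr rfl fun _ _ => by ring
  simp only [add_mul, sum_add_distrib, sum_sum_mul_kron_left, sum_sum_mul_kron_right, hσ]
  ring

lemma deformed_acceleration_eq {Γ : Fin q → Fin q → Fin q → ℝ} {ψ : Fin q → ℝ}
    {σ : Fin q → Fin q → ℝ} {φ a v : Fin q → ℝ} {ρ : ℝ}
    (hauto : ∀ τ, a τ + ∑ α, ∑ β, Γ τ α β * v α * v β = ρ * v τ) :
    (fun τ => a τ + ∑ α, ∑ β,
        (Γ τ α β + ψ α * kron τ β + ψ β * kron τ α + σ α β * φ τ) * v α * v β) =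
      (ρ + 2 * ∑ γ, ψ γ * v γ) • v + (∑ α, ∑ β, σ α β * v α * v β) • φ := by
  funext τ
  rw [sum_sum_deformed_mul, Pi.add_apply, Pi.smul_apply, Pi.smul_apply, smul_eq_mul,
    smul_eq_mul]
  linarith [hauto τ]

end Contraction

theorem stmt_9_general (q : ℕ)
    (Γ : (Fin q → ℝ) → Fin q → Fin q → Fin q → ℝ)
    (ψ : (Fin q → ℝ) → Fin q → ℝ)
    (σ : (Fin q → ℝ) → Fin q → Fin q → ℝ)
    (φ : (Fin q → ℝ) → Fin q → ℝ)
    (η₁ η₂ : ℝ) (u u' u'' : ℝ → Fin q → ℝ)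
    (ρ : ℝ → ℝ)
    (hauto : ∀ η ∈ Set.Ioo η₁ η₂, ∀ α,
      u'' η α + ∑ β, ∑ γ, Γ (u η) α β γ * u' η β * u' η γ = ρ η * u' η α) :
    ∀ η ∈ Set.Ioo η₁ η₂,
      (fun τ => u'' η τ + ∑ α, ∑ β,
          (Γ (u η) τ α β + ψ (u η) α * kron τ β + ψ (u η) β * kron τ α +
            σ (u η) α β * φ (u η) τ) * u' η α * u' η β) =
        (ρ η + 2 * ∑ τ, ψ (u η) τ * u' η τ) • u' η +
          (∑ α, ∑ β, σ (u η) α β * u' η α * u' η β) • φ (u η) ∧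
      (fun τ => u'' η τ + ∑ α, ∑ β,
          (Γ (u η) τ α β + ψ (u η) α * kron τ β + ψ (u η) β * kron τ α +
            σ (u η) α β * φ (u η) τ) * u' η α * u' η β) ∈
        Submodule.span ℝ ({u' η, φ (u η)} : Set (Fin q → ℝ)) := by
  intro η hη
  have hacc := deformed_acceleration_eq (ψ := ψ (u η)) (σ := σ (u η)) (φ := φ (u η))
    (hauto η hη)
  exact ⟨hacc, hacc ▸ Submodule.mem_span_pair.mpr ⟨_, _, rfl⟩⟩

/-- na₍₃₎-type deformations
`Γ̄^τ_{αβ} = Γ^τ_{αβ} + ψ_(α δ^τ_β) + σ_{αβ} φ^τ` carry every a-parallel of `Γ`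
into a nearly autoparallel curve: its `Γ̄`-acceleration equals
`(ρ + 2ψ_τ u'^τ) • u' + (σ_{αβ} u'^α u'^β) • φ`, hence lies in the span of `u'`
and `φ`. -/
theorem stmt_9 (q : ℕ) (U : Set (Fin q → ℝ)) (hU : IsOpen U)
    (Γ : (Fin q → ℝ) → Fin q → Fin q → Fin q → ℝ) (hΓ : ContinuousOn Γ U)
    (ψ : (Fin q → ℝ) → Fin q → ℝ) (hψ : ContinuousOn ψ U)
    (σ : (Fin q → ℝ) → Fin q → Fin q → ℝ) (hσ : ContinuousOn σ U)
    (hσsymm : ∀ x ∈ U, ∀ α β, σ x α β = σ x β α)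
    (φ : (Fin q → ℝ) → Fin q → ℝ) (hφ : ContinuousOn φ U)
    (η₁ η₂ : ℝ) (u u' u'' : ℝ → Fin q → ℝ)
    (hmem : ∀ η ∈ Set.Ioo η₁ η₂, u η ∈ U)
    (hd1 : ∀ η ∈ Set.Ioo η₁ η₂, HasDerivAt u (u' η) η)
    (hd2 : ∀ η ∈ Set.Ioo η₁ η₂, HasDerivAt u' (u'' η) η)
    (ρ : ℝ → ℝ)
    (hauto : ∀ η ∈ Set.Ioo η₁ η₂, ∀ α,
      u'' η α + ∑ β, ∑ γ, Γ (u η) α β γ * u' η β * u' η γ = ρ η * u' η α) :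
    ∀ η ∈ Set.Ioo η₁ η₂,
      (fun τ => u'' η τ + ∑ α, ∑ β,
          (Γ (u η) τ α β + ψ (u η) α * kron τ β + ψ (u η) β * kron τ α +
            σ (u η) α β * φ (u η) τ) * u' η α * u' η β) =
        (ρ η + 2 * ∑ τ, ψ (u η) τ * u' η τ) • u' η +
          (∑ α, ∑ β, σ (u η) α β * u' η α * u' η β) • φ (u η) ∧
      (fun τ => u'' η τ + ∑ α, ∑ β,
          (Γ (u η) τ α β + ψ (u η) α * kron τ β + ψ (u η) β * kron τ α +
            σ (u η) α β * φ (u η) τ) * u' η α * u' η β) ∈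
        Submodule.span ℝ ({u' η, φ (u η)} : Set (Fin q → ℝ)) :=
  stmt_9_general q Γ ψ σ φ η₁ η₂ u u' u'' ρ hauto
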